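/- The Gram matrix of the Frobenius form on the 5-dimensional algebra 4B_α (with (a_i, a_i) = 1, (a_i, a_{i+1}) = α²/4, and the remaining values determined by associativity of the form) has determinant (α⁴/2⁸)(α−2)⁴(α+1)², which is nonnegative for all real α and vanishes exactly at α ∈ {−1, 0, 2}. -/

import Mathlib

noncomputable section

/-- Index type for the basis `a₋₁, a₀, a₁, a₂` (as `some i`, `i : ZMod 4`) and `s`
(as `none`) of the algebra `4B_α`. -/
abbrev I4 : Type := Option (ZMod 4)

/-- Basis vectors. -/
def e4 (F : Type*) [Field F] (k : I4) : I4 → F := Pi.single k 1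

open scoped Classical in
/-- Structure constants of `4B_α`:  here `β = α²/2`, `s = a₀∘a₁`, indices mod 4,
`a_i a_{i+2} = -(α/2)(a_{i+1}+a_{i+3}) - (2/α)s` (so that `⟨a_i, a_{i+2}⟩ ≅ 3C_α`). -/
def T4B (F : Type*) [Field F] (α : F) : I4 → I4 → (I4 → F) :=
  fun i j =>
    match i, j with
    | some i, some j =>
        if i = j then e4 F (some i)
        else if j - i = 1 ∨ j - i = 3 then
          (α ^ 2 / 2) • (e4 F (some i) + e4 F (some j)) + e4 F none
        else
          (-(α / 2)) • (e4 F (some (i + 1)) + e4 F (some (i + 3))) - (2 / α) • e4 F none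
    | some i, none =>
        (-(α ^ 2 * (1 - α + α ^ 2) / 4)) • e4 F (some i)
          + ((2 - α) * α ^ 3 / 8) • (e4 F (some (i - 1)) + e4 F (some (i + 1)))
          + ((2 - α) * α / 2) • e4 F none
    | none, some j =>
        (-(α ^ 2 * (1 - α + α ^ 2) / 4)) • e4 F (some j)
          + ((2 - α) * α ^ 3 / 8) • (e4 F (some (j - 1)) + e4 F (some (j + 1)))
          + ((2 - α) * α / 2) • e4 F none
    | none, none =>
        ((α - 2) * (2 * α - 1) * α ^ 4 / 16) • (∑ k : ZMod 4, e4 F (some k))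
          + (α ^ 2 * (1 - 6 * α + 2 * α ^ 2) / 4) • e4 F none

/-- The bilinear multiplication of `4B_α`. -/
def mul4B (F : Type*) [Field F] (α : F) :
    (I4 → F) →ₗ[F] (I4 → F) →ₗ[F] (I4 → F) :=
  LinearMap.mk₂ F (fun x y => ∑ i : I4, ∑ j : I4, (x i * y j) • T4B F α i j)
    (fun x x' y => by simp [add_mul, add_smul, Finset.sum_add_distrib])
    (fun c x y => by simp [Finset.smul_sum, smul_smul, mul_assoc])
    (fun x y y' => by simp [mul_add, add_smul, Finset.sum_add_distrib])
    (fun c x y => by simp [Finset.smul_sum, smul_smul, mul_left_comm])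


/-! The form is pinned down by associativity: `(a_i a_i, a_{i+1}) = (a_i, a_i a_{i+1})` gives
`(a_i, s)`, then `(a_i a_i, a_{i+2})` gives `(a_i, a_{i+2}) = α/2`, and `(a_0 a_1, s)` gives
`(s, s)`. On the span of the `a_i` the Gram matrix is circulant, and its border `(a_i, s)` is
constant, so it couples `s` only to the all-ones eigenvector; the determinant therefore factors
as the product of the other three circulant eigenvalues `1 - α/2, 1 - α/2, (2 - α)(1 + α)/2`
and a `2 × 2` determinant. -/

theorem det_bordered_circulant_four {R : Type*} [CommRing R] (p q r c t : R) :
    !![t, c, c, c, c;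
       c, p, q, r, q;
       c, q, p, q, r;
       c, r, q, p, q;
       c, q, r, q, p].det = (p - r) ^ 2 * (p - 2 * q + r) * ((p + 2 * q + r) * t - 4 * c ^ 2) := by
  simp [Matrix.det_succ_row_zero, Fin.sum_univ_succ, Fin.succAbove]
  ring

variable {F : Type*} [Field F] {α : F}

theorem mul4B_basis (i j : I4) : mul4B F α (e4 F i) (e4 F j) = T4B F α i j := by
  cases i <;> cases j <;>
    simp [mul4B, e4, Pi.single_apply, mul_ite, Finset.sum_ite_eq']

theorem mul4B_self (i : ZMod 4) : mul4B F α (e4 F (some i)) (e4 F (some i)) = e4 F (some i) := by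
  simp [mul4B_basis, T4B]

theorem mul4B_add_one (i : ZMod 4) :
    mul4B F α (e4 F (some i)) (e4 F (some (i + 1))) =
      (α ^ 2 / 2) • (e4 F (some i) + e4 F (some (i + 1))) + e4 F none := by
  have : i ≠ i + 1 := by revert i; decide
  simp [mul4B_basis, T4B, this]

theorem mul4B_add_two (i : ZMod 4) :
    mul4B F α (e4 F (some i)) (e4 F (some (i + 2))) =
      (-(α / 2)) • (e4 F (some (i + 1)) + e4 F (some (i + 3))) - (2 / α) • e4 F none := by
  have : i ≠ i + 2 := by revert i; decide
  simp +decide [mul4B_basis, T4B, this]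

theorem mul4B_none (i : ZMod 4) :
    mul4B F α (e4 F (some i)) (e4 F none) =
      (-(α ^ 2 * (1 - α + α ^ 2) / 4)) • e4 F (some i)
        + ((2 - α) * α ^ 3 / 8) • (e4 F (some (i - 1)) + e4 F (some (i + 1)))
        + ((2 - α) * α / 2) • e4 F none :=
  mul4B_basis _ _

structure IsNormalizedFrobeniusForm4B (α : F) (B : (I4 → F) →ₗ[F] (I4 → F) →ₗ[F] F) : Prop where
  symm : ∀ x y, B x y = B y x
  assoc : ∀ x y z, B (mul4B F α x y) z = B x (mul4B F α y z)
  apply_self : ∀ i : ZMod 4, B (e4 F (some i)) (e4 F (some i)) = 1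
  apply_add_one : ∀ i : ZMod 4, B (e4 F (some i)) (e4 F (some (i + 1))) = α ^ 2 / 4

def gram4B (α : F) : Matrix I4 I4 F
  | some i, some j => ![1, α ^ 2 / 4, α / 2, α ^ 2 / 4] (j - i)
  | some _, none | none, some _ => -(α ^ 2 / 4) - α ^ 4 / 8
  | none, none => 5 * α ^ 4 / 16 - α ^ 5 / 8 + α ^ 6 / 8

namespace IsNormalizedFrobeniusForm4B

variable {B : (I4 → F) →ₗ[F] (I4 → F) →ₗ[F] F}

theorem apply_add_three (hB : IsNormalizedFrobeniusForm4B α B) (i : ZMod 4) :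
    B (e4 F (some i)) (e4 F (some (i + 3))) = α ^ 2 / 4 := by
  rw [hB.symm, ← hB.apply_add_one (i + 3), add_assoc]
  congr 4
  revert i; decide

theorem apply_none [CharZero F] (hB : IsNormalizedFrobeniusForm4B α B) (i : ZMod 4) :
    B (e4 F (some i)) (e4 F none) = -(α ^ 2 / 4) - α ^ 4 / 8 := by
  have h := hB.assoc (e4 F (some i)) (e4 F (some i)) (e4 F (some (i + 1)))
  simp only [mul4B_self, mul4B_add_one, map_add, map_smul, smul_eq_mul, hB.apply_self,
    hB.apply_add_one] at h
  linear_combination -h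

theorem apply_add_two [CharZero F] (hB : IsNormalizedFrobeniusForm4B α B) (i : ZMod 4) :
    B (e4 F (some i)) (e4 F (some (i + 2))) = α / 2 := by
  have h := hB.assoc (e4 F (some i)) (e4 F (some i)) (e4 F (some (i + 2)))
  simp only [mul4B_self, mul4B_add_two, map_add, map_sub, map_smul, smul_eq_mul,
    hB.apply_add_one, hB.apply_add_three, hB.apply_none] at h
  -- `α * α / α = α` holds in every field, also at `α = 0`
  linear_combination h + (1 / 2 + α ^ 2 / 4) * mul_self_div_self α

theorem apply_none_none [CharZero F] (hB : IsNormalizedFrobeniusForm4B α B) :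
    B (e4 F none) (e4 F none) = 5 * α ^ 4 / 16 - α ^ 5 / 8 + α ^ 6 / 8 := by
  have h := hB.assoc (e4 F (some 0)) (e4 F (some (0 + 1))) (e4 F none)
  simp only [mul4B_add_one, mul4B_none, add_sub_cancel_right, add_assoc, one_add_one_eq_two,
    map_add, map_smul, LinearMap.add_apply, LinearMap.smul_apply, smul_eq_mul,
    hB.apply_self, hB.apply_add_one, hB.apply_add_two, hB.apply_none] at h
  linear_combination h

theorem gram_eq [CharZero F] (hB : IsNormalizedFrobeniusForm4B α B) :
    Matrix.of (fun i j : I4 => B (e4 F i) (e4 F j)) = gram4B α := by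
  ext (_ | i) (_ | j)
  · exact hB.apply_none_none
  · rw [Matrix.of_apply, hB.symm]
    exact hB.apply_none j
  · exact hB.apply_none i
  · obtain ⟨k, rfl⟩ : ∃ k, j = i + k := ⟨j - i, by ring⟩
    simp only [Matrix.of_apply, gram4B, add_sub_cancel_left]
    obtain rfl | rfl | rfl | rfl : k = 0 ∨ k = 1 ∨ k = 2 ∨ k = 3 := by revert k; decide
    · simpa using hB.apply_self i
    · exact hB.apply_add_one i
    · exact hB.apply_add_two i
    · exact hB.apply_add_three i

end IsNormalizedFrobeniusForm4B

theorem det_gram4B [CharZero F] (α : F) :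
    (gram4B α).det = α ^ 4 / 2 ^ 8 * (α - 2) ^ 4 * (α + 1) ^ 2 := by
  let e : Fin 5 ≃ I4 := finSuccEquiv 4
  have h : (gram4B α).submatrix e e =
      !![5 * α ^ 4 / 16 - α ^ 5 / 8 + α ^ 6 / 8, -(α ^ 2 / 4) - α ^ 4 / 8,
          -(α ^ 2 / 4) - α ^ 4 / 8, -(α ^ 2 / 4) - α ^ 4 / 8, -(α ^ 2 / 4) - α ^ 4 / 8;
         -(α ^ 2 / 4) - α ^ 4 / 8, 1, α ^ 2 / 4, α / 2, α ^ 2 / 4;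
         -(α ^ 2 / 4) - α ^ 4 / 8, α ^ 2 / 4, 1, α ^ 2 / 4, α / 2;
         -(α ^ 2 / 4) - α ^ 4 / 8, α / 2, α ^ 2 / 4, 1, α ^ 2 / 4;
         -(α ^ 2 / 4) - α ^ 4 / 8, α ^ 2 / 4, α / 2, α ^ 2 / 4, 1] := by
    ext a b
    fin_cases a <;> fin_cases b <;> rfl
  rw [← Matrix.det_submatrix_equiv_self e, h, det_bordered_circulant_four]
  ring

theorem fourB_gram_general (α : ℝ)
    (B : (I4 → ℝ) →ₗ[ℝ] (I4 → ℝ) →ₗ[ℝ] ℝ)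
    (hsymm : ∀ x y : I4 → ℝ, B x y = B y x)
    (hfrob : ∀ x y z : I4 → ℝ, B (mul4B ℝ α x y) z = B x (mul4B ℝ α y z))
    (hdiag : ∀ i : ZMod 4, B (e4 ℝ (some i)) (e4 ℝ (some i)) = 1)
    (hoff : ∀ i : ZMod 4, B (e4 ℝ (some i)) (e4 ℝ (some (i + 1))) = α ^ 2 / 4) :
    (Matrix.of fun i j : I4 => B (e4 ℝ i) (e4 ℝ j)).det =
      α ^ 4 / 2 ^ 8 * (α - 2) ^ 4 * (α + 1) ^ 2 ∧
    (∀ γ : ℝ, 0 ≤ γ ^ 4 / 2 ^ 8 * (γ - 2) ^ 4 * (γ + 1) ^ 2 ∧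
      (γ ^ 4 / 2 ^ 8 * (γ - 2) ^ 4 * (γ + 1) ^ 2 = 0 ↔ γ = -1 ∨ γ = 0 ∨ γ = 2)) := by
  have hB : IsNormalizedFrobeniusForm4B α B := ⟨hsymm, hfrob, hdiag, hoff⟩
  refine ⟨by rw [hB.gram_eq, det_gram4B], fun γ => ⟨by positivity, ?_⟩⟩
  simp only [mul_eq_zero, div_eq_zero_iff, ne_eq, OfNat.ofNat_ne_zero, not_false_eq_true,
    pow_eq_zero_iff, or_false, sub_eq_zero, add_eq_zero_iff_eq_neg]
  tauto

/-- The Gram matrix of the Frobenius form on `4B_α` (with `(a_i,a_i) = 1`,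
`(a_i,a_{i+1}) = α²/4`, the rest determined by associativity of the form) has
determinant `(α⁴/2⁸)(α-2)⁴(α+1)²`; this quantity is nonnegative for every real `α` and
vanishes exactly at `α ∈ {-1, 0, 2}`. -/
theorem fourB_gram (α : ℝ)
    (hα0 : α ≠ 0) (hα1 : α ≠ 1) (hα2 : α ≠ 2)
    (hp1 : 2 * α ^ 5 - 4 * α ^ 4 - 6 * α ^ 3 + 13 * α ^ 2 - 7 * α + 1 ≠ 0)
    (hp2 : 66 * α ^ 6 - 124 * α ^ 5 + 26 * α ^ 4 + 71 * α ^ 3 - 57 * α ^ 2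
      + 17 * α - 2 ≠ 0)
    (hp3 : 16 * α ^ 7 - 24 * α ^ 6 - 22 * α ^ 5 + 78 * α ^ 4 - 91 * α ^ 3
      + 57 * α ^ 2 - 18 * α + 2 ≠ 0)
    (B : (I4 → ℝ) →ₗ[ℝ] (I4 → ℝ) →ₗ[ℝ] ℝ)
    (hsymm : ∀ x y : I4 → ℝ, B x y = B y x)
    (hfrob : ∀ x y z : I4 → ℝ, B (mul4B ℝ α x y) z = B x (mul4B ℝ α y z))
    (hdiag : ∀ i : ZMod 4, B (e4 ℝ (some i)) (e4 ℝ (some i)) = 1)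
    (hoff : ∀ i : ZMod 4, B (e4 ℝ (some i)) (e4 ℝ (some (i + 1))) = α ^ 2 / 4) :
    (Matrix.of fun i j : I4 => B (e4 ℝ i) (e4 ℝ j)).det =
      α ^ 4 / 2 ^ 8 * (α - 2) ^ 4 * (α + 1) ^ 2 ∧
    (∀ γ : ℝ, 0 ≤ γ ^ 4 / 2 ^ 8 * (γ - 2) ^ 4 * (γ + 1) ^ 2 ∧
      (γ ^ 4 / 2 ^ 8 * (γ - 2) ^ 4 * (γ + 1) ^ 2 = 0 ↔ γ = -1 ∨ γ = 0 ∨ γ = 2)) :=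
  fourB_gram_general α B hsymm hfrob hdiag hoff
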